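/- Let w_1,...,w_m be i.i.d. N(0, I_d) vectors and define the m-feature estimator SM̂_m(x,y) = (1/m) Σ_{i=1}^m exp(w_iᵀx - ‖x‖²/2) exp(w_iᵀy - ‖y‖²/2). Then E[SM̂_m(x,y)] = exp(xᵀy) and Var(SM̂_m(x,y)) = (1/m) exp(‖x+y‖²) exp(2xᵀy) (1 - exp(-‖x+y‖²)). -/

import Mathlib

/-!
The single-sample estimator equals `exp (-(‖x‖² + ‖y‖²) / 2) · exp (uᵀ(x + y))`, so its `k`-th
moment under `N(0, I)` is a value of the Gaussian moment generating function, namely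
`exp (k (k - 1) / 2 · ‖x + y‖² + k xᵀy)`. The cases `k = 1, 2` give the mean `exp (xᵀy)` and the
variance of one sample; averaging `m` independent copies keeps the mean and divides the variance
by `m`.
-/

open MeasureTheory ProbabilityTheory Real

open scoped NNReal

section GaussianMGF

variable {ι : Type*} [Fintype ι]

lemma integrable_exp_sum_mul_pi_gaussianReal (μ : ι → ℝ) (v : ι → ℝ≥0) (z : ι → ℝ) :
    Integrable (fun u : ι → ℝ => exp (∑ j, u j * z j))
      (Measure.pi fun j => gaussianReal (μ j) (v j)) := by
  simp_rw [exp_sum]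
  exact Integrable.fintype_prod fun j => by
    simpa only [mul_comm] using integrable_exp_mul_gaussianReal (μ := μ j) (v := v j) (z j)

lemma integral_exp_sum_mul_pi_gaussianReal (μ : ι → ℝ) (v : ι → ℝ≥0) (z : ι → ℝ) :
    ∫ u, exp (∑ j, u j * z j) ∂(Measure.pi fun j => gaussianReal (μ j) (v j))
      = exp (∑ j, (μ j * z j + v j * z j ^ 2 / 2)) := by
  simp_rw [exp_sum]
  rw [integral_fintype_prod_eq_prod (f := fun j t => exp (t * z j))]
  refine Finset.prod_congr rfl fun j _ => ?_
  simpa only [mgf, id, mul_comm] using congrFun (mgf_id_gaussianReal (μ := μ j) (v := v j)) (z j)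

end GaussianMGF

section PositiveRandomFeature

variable {ι : Type*} [Fintype ι]

/-- The single-sample positive random feature estimator of the softmax kernel `exp (xᵀy)`. -/
noncomputable def prfEstimator (x y u : ι → ℝ) : ℝ :=
  exp (∑ j, u j * x j - (∑ j, x j ^ 2) / 2) * exp (∑ j, u j * y j - (∑ j, y j ^ 2) / 2)

variable (x y : ι → ℝ)

lemma prfEstimator_pow (k : ℕ) (u : ι → ℝ) :
    prfEstimator x y u ^ k
      = exp (-(k * (∑ j, x j ^ 2 + ∑ j, y j ^ 2) / 2)) * exp (∑ j, u j * (k * (x j + y j))) := by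
  rw [prfEstimator, ← exp_add, ← exp_nat_mul, ← exp_add]
  congr 1
  simp only [mul_add, mul_left_comm _ (k : ℝ), Finset.sum_add_distrib, ← Finset.mul_sum]
  ring

lemma integrable_prfEstimator_pow (k : ℕ) :
    Integrable (fun u => prfEstimator x y u ^ k) (Measure.pi fun _ : ι => gaussianReal 0 1) := by
  simp_rw [prfEstimator_pow]
  exact (integrable_exp_sum_mul_pi_gaussianReal _ _ _).const_mul _

lemma integral_prfEstimator_pow (k : ℕ) :
    ∫ u, prfEstimator x y u ^ k ∂(Measure.pi fun _ : ι => gaussianReal 0 1)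
      = exp (k * (k - 1) / 2 * ∑ j, (x j + y j) ^ 2 + k * ∑ j, x j * y j) := by
  simp_rw [prfEstimator_pow]
  rw [integral_const_mul, integral_exp_sum_mul_pi_gaussianReal, ← exp_add]
  congr 1
  simp only [zero_mul, zero_add, NNReal.coe_one, one_mul, Finset.mul_sum, Finset.sum_div,
    ← Finset.sum_add_distrib, ← Finset.sum_neg_distrib]
  exact Finset.sum_congr rfl fun j _ => by ring

lemma integrable_prfEstimator :
    Integrable (prfEstimator x y) (Measure.pi fun _ : ι => gaussianReal 0 1) := by
  simpa using integrable_prfEstimator_pow x y 1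

lemma integral_prfEstimator :
    ∫ u, prfEstimator x y u ∂(Measure.pi fun _ : ι => gaussianReal 0 1) = exp (∑ j, x j * y j) := by
  simpa using integral_prfEstimator_pow x y 1

lemma continuous_prfEstimator : Continuous (prfEstimator x y) := by
  unfold prfEstimator; fun_prop

lemma memLp_two_prfEstimator :
    MemLp (prfEstimator x y) 2 (Measure.pi fun _ : ι => gaussianReal 0 1) :=
  (memLp_two_iff_integrable_sq (continuous_prfEstimator x y).aestronglyMeasurable).2
    (integrable_prfEstimator_pow x y 2)

lemma variance_prfEstimator :
    variance (prfEstimator x y) (Measure.pi fun _ : ι => gaussianReal 0 1)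
      = exp (∑ j, (x j + y j) ^ 2) * exp (2 * ∑ j, x j * y j)
        * (1 - exp (-(∑ j, (x j + y j) ^ 2))) := by
  rw [variance_eq_sub (memLp_two_prfEstimator x y)]
  simp only [Pi.pow_apply, integral_prfEstimator_pow, integral_prfEstimator]
  rw [sq, ← exp_add, ← exp_add, mul_one_sub, ← exp_add]
  congr 2 <;> push_cast <;> ring

end PositiveRandomFeature

section Average

variable {Ω E ι : Type*} [MeasurableSpace Ω] [MeasurableSpace E] [Fintype ι]
  {μ : Measure Ω} {ν : Measure E} {w : ι → Ω → E}

lemma integral_average_comp_of_map_eq [Nonempty ι] (hw : ∀ i, AEMeasurable (w i) μ)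
    (hmap : ∀ i, μ.map (w i) = ν) {f : E → ℝ} (hf : Integrable f ν) :
    ∫ ω, (1 / (Fintype.card ι : ℝ)) * ∑ i, f (w i ω) ∂μ = ∫ u, f u ∂ν := by
  have hcomp : ∀ i, ∫ ω, f (w i ω) ∂μ = ∫ u, f u ∂ν := fun i => by
    rw [← hmap i, integral_map (hw i) (hmap i ▸ hf.aestronglyMeasurable)]
  have hint : ∀ i, Integrable (fun ω => f (w i ω)) μ := fun i =>
    (hmap i ▸ hf).comp_aemeasurable (hw i)
  rw [integral_const_mul, integral_finsetSum _ fun i _ => hint i]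
  simp [hcomp]

lemma variance_average_comp_of_iIndepFun (hw : ∀ i, AEMeasurable (w i) μ)
    (hindep : iIndepFun w μ) (hmap : ∀ i, μ.map (w i) = ν) {f : E → ℝ} (hf : Measurable f)
    (hf2 : MemLp f 2 ν) :
    variance (fun ω => (1 / (Fintype.card ι : ℝ)) * ∑ i, f (w i ω)) μ
      = variance f ν / Fintype.card ι := by
  have hmem : ∀ i, MemLp (f ∘ w i) 2 μ := fun i => (hmap i ▸ hf2).comp_of_map (hw i)
  have hvar : ∀ i, variance (f ∘ w i) μ = variance f ν := fun i => by
    rw [← variance_map hf.aemeasurable (hw i), hmap i]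
  have hsum : (fun ω => ∑ i, f (w i ω)) = ∑ i, f ∘ w i := by ext; simp
  rw [variance_const_mul, hsum, IndepFun.variance_sum (fun i _ => hmem i)
    fun i _ j _ hij => (hindep.indepFun hij).comp hf hf]
  simp only [hvar, Finset.sum_const, Finset.card_univ, nsmul_eq_mul]
  rcases eq_or_ne (Fintype.card ι : ℝ) 0 with h | h
  · simp [h]
  · field_simp

end Average

theorem prf_m_mean_variance_general {Ω : Type*} [MeasurableSpace Ω] (μ : Measure Ω)
    (d m : ℕ) (hm : 1 ≤ m) (w : Fin m → Ω → (Fin d → ℝ))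
    (hindep : iIndepFun w μ)
    (hmap : ∀ i, Measure.map (w i) μ = Measure.pi (fun _ : Fin d => gaussianReal 0 1))
    (x y : Fin d → ℝ) :
    (∫ ω, (1 / (m : ℝ)) * ∑ i, Real.exp (∑ j, w i ω j * x j - (∑ j, x j ^ 2) / 2)
        * Real.exp (∑ j, w i ω j * y j - (∑ j, y j ^ 2) / 2) ∂μ
      = Real.exp (∑ j, x j * y j)) ∧
    variance (fun ω => (1 / (m : ℝ)) * ∑ i,
        Real.exp (∑ j, w i ω j * x j - (∑ j, x j ^ 2) / 2)
        * Real.exp (∑ j, w i ω j * y j - (∑ j, y j ^ 2) / 2)) μ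
      = (1 / (m : ℝ)) * Real.exp (∑ j, (x j + y j) ^ 2)
        * Real.exp (2 * ∑ j, x j * y j) * (1 - Real.exp (-(∑ j, (x j + y j) ^ 2))) := by
  have hw : ∀ i, AEMeasurable (w i) μ := fun i =>
    .of_map_ne_zero (by simp [hmap, IsProbabilityMeasure.ne_zero])
  have : Nonempty (Fin m) := Fin.pos_iff_nonempty.1 hm
  constructor
  · have hmean := integral_average_comp_of_map_eq hw hmap (integrable_prfEstimator x y)
    rw [Fintype.card_fin, integral_prfEstimator] at hmean
    exact hmean
  · have hvar := variance_average_comp_of_iIndepFun hw hindep hmap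
      (continuous_prfEstimator x y).measurable (memLp_two_prfEstimator x y)
    rw [Fintype.card_fin, variance_prfEstimator] at hvar
    exact hvar.trans (by ring)

/-- The `m`-feature positive random feature estimator
`SM̂_m(x,y) = (1/m) Σ_i exp(w_iᵀx - ‖x‖²/2) exp(w_iᵀy - ‖y‖²/2)` with `w_1, ..., w_m` i.i.d.
standard Gaussian vectors satisfies `E[SM̂_m(x,y)] = exp(xᵀy)` and
`Var(SM̂_m(x,y)) = (1/m) exp(‖x+y‖²) exp(2xᵀy) (1 - exp(-‖x+y‖²))`. -/
theorem prf_m_mean_variance {Ω : Type*} [MeasurableSpace Ω] (μ : Measure Ω)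
    [IsProbabilityMeasure μ] (d m : ℕ) (hm : 1 ≤ m) (w : Fin m → Ω → (Fin d → ℝ))
    (hw : ∀ i, Measurable (w i))
    (hindep : iIndepFun w μ)
    (hmap : ∀ i, Measure.map (w i) μ = Measure.pi (fun _ : Fin d => gaussianReal 0 1))
    (x y : Fin d → ℝ) :
    (∫ ω, (1 / (m : ℝ)) * ∑ i, Real.exp (∑ j, w i ω j * x j - (∑ j, x j ^ 2) / 2)
        * Real.exp (∑ j, w i ω j * y j - (∑ j, y j ^ 2) / 2) ∂μ
      = Real.exp (∑ j, x j * y j)) ∧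
    variance (fun ω => (1 / (m : ℝ)) * ∑ i,
        Real.exp (∑ j, w i ω j * x j - (∑ j, x j ^ 2) / 2)
        * Real.exp (∑ j, w i ω j * y j - (∑ j, y j ^ 2) / 2)) μ
      = (1 / (m : ℝ)) * Real.exp (∑ j, (x j + y j) ^ 2)
        * Real.exp (2 * ∑ j, x j * y j) * (1 - Real.exp (-(∑ j, (x j + y j) ^ 2))) :=
  prf_m_mean_variance_general μ d m hm w hindep hmap x y
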